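/- The class of languages accepted by quasi-deterministic stateless (qDN) sensing 5'→3' WK automata and the class REG of regular languages are incomparable under set-theoretic inclusion: the non-regular language { aⁿbⁿ : n ≥ 0 } is accepted by a stateless sensing 5'→3' WK automaton (with single transition {q} = δ(q,a,b)), while the regular language b*ab* + b* is accepted by no stateless sensing 5'→3' WK automaton. -/

import Mathlib

open Computability

/-- The two-letter alphabet `{a, b}`. -/
inductive Letter : Type
  | a : Letter
  | b : Letter
deriving DecidableEq

instance : Fintype Letter :=
  ⟨{Letter.a, Letter.b}, fun x => by cases x <;> simp⟩

open Letter

/-- A sensing 5'→3' Watson-Crick automaton over the alphabet `T` with state set `Q`: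
an initial state `q0`, a set `F` of final states, and a transition mapping
`δ : Q × T* × T* → 2^Q` that is nonempty for only finitely many triples. -/
structure WKAutomaton (T : Type) (Q : Type) where
  q0 : Q
  F : Set Q
  δ : Q → List T → List T → Set Q
  finite_delta : {t : Q × List T × List T | (δ t.1 t.2.1 t.2.2).Nonempty}.Finite

namespace WKAutomaton

variable {T Q : Type}

/-- One computation step on configurations:
`(q, x ++ w' ++ y) ⇒ (q', w')` iff `q' ∈ δ q x y`. -/
def Step (A : WKAutomaton T Q) (c c' : Q × List T) : Prop :=
  ∃ x y : List T, c.2 = x ++ c'.2 ++ y ∧ c'.1 ∈ A.δ c.1 x y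

/-- The accepted language: words `w` with `(q₀, w) ⇒* (q_F, λ)` for some final `q_F`. -/
def Lang (A : WKAutomaton T Q) : Set (List T) :=
  {w | ∃ qf ∈ A.F, Relation.ReflTransGen A.Step (A.q0, w) (qf, [])}

/-- `A` is deterministic: in every configuration at most one computation step
(choice of `x`, `y`, `w'`, `q'`) is applicable. -/
def Deterministic (A : WKAutomaton T Q) : Prop :=
  ∀ (q : Q) (w x₁ y₁ w₁ x₂ y₂ w₂ : List T) (q₁ q₂ : Q),
    w = x₁ ++ w₁ ++ y₁ → q₁ ∈ A.δ q x₁ y₁ →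
    w = x₂ ++ w₂ ++ y₂ → q₂ ∈ A.δ q x₂ y₂ →
    x₁ = x₂ ∧ y₁ = y₂ ∧ w₁ = w₂ ∧ q₁ = q₂

/-- `A` is quasi-deterministic: for every configuration `(q,w)`, whenever
`(q,w) ⇒ (p,u)` and `(q,w) ⇒ (r,v)`, it holds that `p = r`. -/
def QuasiDet (A : WKAutomaton T Q) : Prop :=
  ∀ (q : Q) (w : List T) (p r : Q) (u v : List T),
    A.Step (q, w) (p, u) → A.Step (q, w) (r, v) → p = r

/-- `A` is state-deterministic: for every state `q` there is at most one state `p`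
with `p ∈ δ(q,u,v)` for some words `u`, `v`. -/
def StateDet (A : WKAutomaton T Q) : Prop :=
  ∀ (q p₁ p₂ : Q) (u₁ v₁ u₂ v₂ : List T),
    p₁ ∈ A.δ q u₁ v₁ → p₂ ∈ A.δ q u₂ v₂ → p₁ = p₂

/-- `A` is stateless: `Q = F = {q₀}`. -/
def Stateless (A : WKAutomaton T Q) : Prop :=
  (∀ q : Q, q = A.q0) ∧ A.F = {A.q0}

/-- `A` is all-final: `Q = F`. -/
def AllFinal (A : WKAutomaton T Q) : Prop := A.F = Set.univ

/-- `A` is simple: at most one head reads in each step. -/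
def Simple (A : WKAutomaton T Q) : Prop :=
  ∀ (q : Q) (u v : List T), (A.δ q u v).Nonempty → u = [] ∨ v = []

/-- `A` is 1-limited: exactly one letter is read in each step. -/
def OneLimited (A : WKAutomaton T Q) : Prop :=
  ∀ (q : Q) (u v : List T), (A.δ q u v).Nonempty →
    (u = [] ∧ v.length = 1) ∨ (u.length = 1 ∧ v = [])

end WKAutomaton

/-- Equality of languages modulo the empty word. -/
def EqModLambda {T : Type} (L₁ L₂ : Set (List T)) : Prop :=
  ∀ w : List T, w ≠ [] → (w ∈ L₁ ↔ w ∈ L₂)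

/-- `L` is accepted (modulo the empty word) by some sensing 5'→3' WK automaton
with a finite state set satisfying the property `P`. -/
def AcceptsWith (T : Type) (P : ∀ Q : Type, WKAutomaton T Q → Prop)
    (L : Set (List T)) : Prop :=
  ∃ (Q : Type) (_ : Finite Q) (A : WKAutomaton T Q), P Q A ∧ EqModLambda A.Lang L

/-- The language `{ aⁿbⁿ : n ≥ 0 }`. -/
def Lanbn : Set (List Letter) :=
  {w | ∃ n : ℕ, w = List.replicate n a ++ List.replicate n b}

/-- The language `b*ab* + b*`. -/
def Lbabb : Set (List Letter) :=
  {w | (∃ i j : ℕ, w = List.replicate i b ++ a :: List.replicate j b) ∨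
       (∃ i : ℕ, w = List.replicate i b)}

/-! A stateless automaton remembers nothing between steps, so any of its transitions may wrap
any word it already accepts, and its language is exactly what is built from `[]` by such
wrappings. The single transition `(a, b)` therefore builds exactly `{aⁿbⁿ}`; and a stateless
automaton accepting `a` must have a transition reading the single letter `a` on one head, which
it can repeat to accept `aa ∉ b*ab* + b*`. The two regularity claims follow from Myhill–Nerode:
the left quotients of `{aⁿbⁿ}` by the words `aⁿ` are pairwise distinct, while a left quotient of
`b*ab* + b*`, the words with at most one `a`, depends only on how many `a`s (0, 1 or more) the
prefix contains. -/

namespace Language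

variable {α : Type*}

theorem not_isRegular_of_append_mem_iff {L : Language α} (x y : ℕ → List α)
    (h : ∀ m n, x m ++ y n ∈ L ↔ m = n) : ¬ L.IsRegular := by
  intro hL
  have hinj : Function.Injective (L.leftQuotient ∘ x) := by
    intro m n hmn
    have hy : y n ∈ L.leftQuotient (x m) := by
      rw [show L.leftQuotient (x m) = L.leftQuotient (x n) from hmn]
      exact (h n n).2 rfl
    exact (h m n).1 hy
  exact (Set.infinite_range_of_injective hinj).mono (Set.range_comp_subset_range _ _)
    hL.finite_range_leftQuotient

theorem isRegular_setOf_count_le [DecidableEq α] (c : α) (k : ℕ) :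
    IsRegular ({w | w.count c ≤ k} : Set (List α)) := by
  refine .of_finite_range_leftQuotient ((Set.finite_range
    fun i : Fin (k + 2) => ({y | i + y.count c ≤ k} : Set (List α))).subset ?_)
  rintro _ ⟨x, rfl⟩
  refine ⟨⟨min (x.count c) (k + 1), by omega⟩, ?_⟩
  ext y
  change min (x.count c) (k + 1) + y.count c ≤ k ↔ (x ++ y).count c ≤ k
  rw [List.count_append]
  omega

end Language

namespace WKAutomaton

variable {T Q : Type} {A : WKAutomaton T Q}

theorem Stateless.nil_mem_lang (hA : A.Stateless) : [] ∈ A.Lang :=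
  ⟨A.q0, hA.2 ▸ rfl, .refl⟩

theorem Stateless.append_mem_lang (hA : A.Stateless) {x y w : List T}
    (hxy : (A.δ A.q0 x y).Nonempty) (hw : w ∈ A.Lang) : x ++ w ++ y ∈ A.Lang := by
  obtain ⟨p, hp⟩ := hxy
  obtain ⟨qf, hqf, hrun⟩ := hw
  exact ⟨qf, hqf, .head ⟨x, y, rfl, hA.1 p ▸ hp⟩ hrun⟩

theorem Stateless.lang_induction (hA : A.Stateless) {motive : List T → Prop} (nil : motive [])
    (wrap : ∀ x y w, (A.δ A.q0 x y).Nonempty → motive w → motive (x ++ w ++ y))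
    {w : List T} (hw : w ∈ A.Lang) : motive w := by
  obtain ⟨qf, -, hrun⟩ := hw
  suffices ∀ cfg, Relation.ReflTransGen A.Step cfg (qf, []) → motive cfg.2 from this _ hrun
  intro cfg hrun
  induction hrun using Relation.ReflTransGen.head_induction_on with
  | refl => exact nil
  | @head cfg _ hstep _ ih =>
    obtain ⟨x, y, hsplit, hmem⟩ := hstep
    rw [hsplit]
    refine wrap x y _ ?_ ih
    rw [← hA.1 cfg.1]
    exact ⟨_, hmem⟩

theorem Stateless.exists_delta_of_singleton_mem_lang (hA : A.Stateless) {c : T}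
    (h : [c] ∈ A.Lang) : ∃ x y, x ++ y = [c] ∧ (A.δ A.q0 x y).Nonempty := by
  refine hA.lang_induction
    (motive := fun w => w = [c] → ∃ x y, x ++ y = [c] ∧ (A.δ A.q0 x y).Nonempty)
    (by simp) ?_ h rfl
  intro x y w hxy ih hw
  by_cases hw0 : w = []
  · subst hw0
    exact ⟨x, y, by simpa using hw, hxy⟩
  · obtain ⟨-, rfl, -⟩ : x = [] ∧ w = [c] ∧ y = [] := by
      simpa [List.append_eq_singleton_iff, hw0] using hw
    exact ih rfl

theorem Stateless.replicate_mem_lang (hA : A.Stateless) {c : T} (h : [c] ∈ A.Lang) (n : ℕ) :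
    List.replicate n c ∈ A.Lang := by
  obtain ⟨x, y, hxy, hδ⟩ := hA.exists_delta_of_singleton_mem_lang h
  induction n with
  | zero => exact hA.nil_mem_lang
  | succ n ih =>
    have hwrap : x ++ List.replicate n c ++ y = List.replicate (n + 1) c := by
      rcases List.append_eq_singleton_iff.1 hxy with ⟨rfl, rfl⟩ | ⟨rfl, rfl⟩
      · simp [List.replicate_succ']
      · simp [List.replicate_succ]
    exact hwrap ▸ hA.append_mem_lang hδ ih

def singleTransition (x y : List T) : WKAutomaton T Unit where
  q0 := ()
  F := {()}
  δ _ u v := {_q | u = x ∧ v = y}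
  finite_delta := (Set.finite_singleton ((), x, y)).subset <| by
    rintro ⟨⟨⟩, u, v⟩ ⟨_, rfl, rfl⟩
    rfl

theorem stateless_singleTransition (x y : List T) : (singleTransition x y).Stateless :=
  ⟨fun _ => rfl, rfl⟩

theorem lang_singleTransition (x y : List T) :
    (singleTransition x y).Lang =
      {w | ∃ n, w = (List.replicate n x).flatten ++ (List.replicate n y).flatten} := by
  have hA := stateless_singleTransition x y
  have hwrap (n : ℕ) : x ++ ((List.replicate n x).flatten ++ (List.replicate n y).flatten) ++ y =
      (List.replicate (n + 1) x).flatten ++ (List.replicate (n + 1) y).flatten := by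
    rw [List.replicate_succ, List.replicate_succ' (a := y)]
    simp
  ext w
  constructor
  · refine hA.lang_induction ⟨0, rfl⟩ ?_
    rintro _ _ w ⟨_, rfl, rfl⟩ ⟨n, rfl⟩
    exact ⟨n + 1, hwrap n⟩
  · rintro ⟨n, rfl⟩
    induction n with
    | zero => exact hA.nil_mem_lang
    | succ n ih => exact hwrap n ▸ hA.append_mem_lang ⟨(), rfl, rfl⟩ ih

end WKAutomaton

open WKAutomaton

theorem lang_singleTransition_a_b : (singleTransition [a] [b]).Lang = Lanbn := by
  simp [lang_singleTransition, Lanbn, List.flatten_replicate_singleton]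

theorem acceptsWith_stateless_Lanbn : AcceptsWith Letter (fun _ A => A.Stateless) Lanbn :=
  ⟨Unit, inferInstance, singleTransition [a] [b], stateless_singleTransition _ _,
    fun _ _ => by rw [lang_singleTransition_a_b]⟩

theorem replicate_append_replicate_mem_Lanbn_iff (m n : ℕ) :
    List.replicate m a ++ List.replicate n b ∈ Lanbn ↔ m = n := by
  constructor
  · rintro ⟨k, hk⟩
    have hca := congrArg (List.count a) hk
    have hcb := congrArg (List.count b) hk
    simp [List.count_replicate] at hca hcb
    omega
  · rintro rfl
    exact ⟨m, rfl⟩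

theorem not_isRegular_Lanbn : ¬ Language.IsRegular (Lanbn : Language Letter) :=
  Language.not_isRegular_of_append_mem_iff _ _ replicate_append_replicate_mem_Lanbn_iff

theorem eq_replicate_b_of_count_a_eq_zero {w : List Letter} (h : w.count a = 0) :
    w = List.replicate w.length b :=
  List.eq_replicate_iff.2 ⟨rfl, fun
    | a, hx => absurd hx (List.count_eq_zero.1 h)
    | b, _ => rfl⟩

theorem Lbabb_eq_setOf_count_a_le_one : Lbabb = {w | w.count a ≤ 1} := by
  ext w
  constructor
  · rintro (⟨i, j, rfl⟩ | ⟨i, rfl⟩) <;> simp [List.count_replicate]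
  · intro h
    rcases Nat.le_one_iff_eq_zero_or_eq_one.1 h with h0 | h1
    · exact Or.inr ⟨w.length, eq_replicate_b_of_count_a_eq_zero h0⟩
    · obtain ⟨s, t, rfl⟩ := List.append_of_mem (List.count_pos_iff.1 (h1 ▸ one_pos))
      obtain ⟨hs, ht⟩ : s.count a = 0 ∧ t.count a = 0 := by
        simp only [List.count_append, List.count_cons_self] at h1
        omega
      exact Or.inl ⟨s.length, t.length, by
        rw [← eq_replicate_b_of_count_a_eq_zero hs, ← eq_replicate_b_of_count_a_eq_zero ht]⟩

theorem isRegular_Lbabb : Language.IsRegular (Lbabb : Language Letter) :=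
  Lbabb_eq_setOf_count_a_le_one ▸ Language.isRegular_setOf_count_le a 1

theorem not_acceptsWith_stateless_Lbabb : ¬ AcceptsWith Letter (fun _ A => A.Stateless) Lbabb := by
  rintro ⟨Q, -, A, hA, hL⟩
  have ha : [a] ∈ A.Lang := (hL [a] (by simp)).2 (by simp [Lbabb_eq_setOf_count_a_le_one])
  have haa := (hL [a, a] (by simp)).1 (hA.replicate_mem_lang ha 2)
  simp [Lbabb_eq_setOf_count_a_le_one] at haa

/-- The class of languages accepted by quasi-deterministic stateless (qDN) sensing
5'→3' WK automata and the class REG of regular languages are incomparable: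
the non-regular language `{ aⁿbⁿ }` is accepted by a stateless sensing 5'→3'
WK automaton, while the regular language `b*ab* + b*` is accepted by no
stateless sensing 5'→3' WK automaton. -/
theorem qDN_incomparable_REG :
    AcceptsWith Letter (fun _ A => A.Stateless) Lanbn ∧
    ¬ Language.IsRegular (Lanbn : Language Letter) ∧
    Language.IsRegular (Lbabb : Language Letter) ∧
    ¬ AcceptsWith Letter (fun _ A => A.Stateless) Lbabb :=
  ⟨acceptsWith_stateless_Lanbn, not_isRegular_Lanbn, isRegular_Lbabb,
    not_acceptsWith_stateless_Lbabb⟩
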